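/- Let κ > 0, G, g positive increasing with G(1) ≥ 1, g(1) ≥ 1, ω ∈ NR(κ,G), α ∈ ℂ, N ≥ 1. Then there exists m ∈ ℤ^d with |m| ≤ N such that α − iπ⟨m,ω⟩ ∈ NR^N_ω(κ/(4G(N)), g); moreover, if this m is nonzero then |α − iπ⟨m,ω⟩| < κ/(4G(N)g(|m|)). -/

import Mathlib

/-!
If `α` itself is not `κ/(4G(N))`-nonresonant, some `0 < |m| ≤ N` brings `α - iπ⟨m,ω⟩` within
`κ/(4G(N))` of `0`. Every other shift `iπ⟨m',ω⟩` with `0 < |m'| ≤ N` has modulus at least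
`πκ/G(N) > 3κ/G(N)` by the Diophantine condition on `ω`, so by the triangle inequality the shifted
point stays at distance at least `κ/(4G(N))` from all of them.
-/

open scoped BigOperators

/-- `⟨m,ω⟩ = ∑ m_j ω_j`. -/
noncomputable def zdot {d : ℕ} (m : Fin d → ℤ) (ω : Fin d → ℝ) : ℝ :=
  ∑ j, (m j : ℝ) * ω j

/-- `|m| = ∑ |m_j|`, as a real number. -/
noncomputable def znorm {d : ℕ} (m : Fin d → ℤ) : ℝ := ((∑ j, |m j| : ℤ) : ℝ)

/-- Membership `β ∈ NR^N_ω(c, g)`; the case `m = 0` of the paper's condition is left out. -/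
def Nonresonant {d : ℕ} (ω : Fin d → ℝ) (N : ℕ) (c : ℝ) (g : ℝ → ℝ) (β : ℂ) : Prop :=
  ∀ m : Fin d → ℤ, m ≠ 0 → znorm m ≤ N →
    c / g (znorm m) ≤ ‖β - (Real.pi : ℂ) * Complex.I * (zdot m ω : ℂ)‖

section

variable {d : ℕ}

@[simp]
lemma zdot_zero (ω : Fin d → ℝ) : zdot 0 ω = 0 := by
  simp [zdot]

@[simp]
lemma znorm_zero : znorm (0 : Fin d → ℤ) = 0 := by
  simp [znorm]

lemma one_le_znorm {m : Fin d → ℤ} (hm : m ≠ 0) : 1 ≤ znorm m := by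
  obtain ⟨j, hj⟩ := Function.ne_iff.mp hm
  have h_abs : (1 : ℤ) ≤ |m j| := Int.one_le_abs hj
  have h_sum : |m j| ≤ ∑ i, |m i| :=
    Finset.single_le_sum (fun i _ => abs_nonneg (m i)) (Finset.mem_univ j)
  unfold znorm
  exact_mod_cast h_abs.trans h_sum

lemma norm_pi_mul_I_mul_ofReal (x : ℝ) :
    ‖(Real.pi : ℂ) * Complex.I * (x : ℂ)‖ = Real.pi * |x| := by
  simp [Complex.norm_real, abs_of_pos Real.pi_pos]

variable {κ : ℝ} {G : ℝ → ℝ} {ω : Fin d → ℝ} {N : ℕ}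

lemma div_le_abs_zdot (hκ : 0 < κ) (hGpos : ∀ t ≥ (1 : ℝ), 0 < G t)
    (hGmono : MonotoneOn G (Set.Ici 1))
    (hω : ∀ m : Fin d → ℤ, m ≠ 0 → κ / G (znorm m) ≤ |zdot m ω|)
    {m : Fin d → ℤ} (hm : m ≠ 0) (hmN : znorm m ≤ N) :
    κ / G N ≤ |zdot m ω| := by
  have hm1 := one_le_znorm hm
  have hG_le : G (znorm m) ≤ G N := hGmono hm1 (hm1.trans hmN) hmN
  calc κ / G N ≤ κ / G (znorm m) := by gcongr; exact hGpos _ hm1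
    _ ≤ |zdot m ω| := hω m hm

lemma div_le_norm_sub_of_norm_le (hκ : 0 < κ) (hGpos : ∀ t ≥ (1 : ℝ), 0 < G t)
    (hGmono : MonotoneOn G (Set.Ici 1))
    (hω : ∀ m : Fin d → ℤ, m ≠ 0 → κ / G (znorm m) ≤ |zdot m ω|)
    (hN : 1 ≤ N) {β : ℂ} (hβ : ‖β‖ ≤ κ / (4 * G N))
    {m : Fin d → ℤ} (hm : m ≠ 0) (hmN : znorm m ≤ N) :
    κ / (4 * G N) ≤ ‖β - (Real.pi : ℂ) * Complex.I * (zdot m ω : ℂ)‖ := by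
  have hGN : 0 < G N := hGpos _ (by exact_mod_cast hN)
  have h_quarter : κ / (4 * G N) = κ / G N / 4 := by ring
  have h_pos : 0 < κ / G N := div_pos hκ hGN
  have h_shift : 3 * (κ / G N) ≤ ‖(Real.pi : ℂ) * Complex.I * (zdot m ω : ℂ)‖ := by
    rw [norm_pi_mul_I_mul_ofReal]
    have := div_le_abs_zdot hκ hGpos hGmono hω hm hmN
    nlinarith [Real.pi_gt_three, abs_nonneg (zdot m ω)]
  calc κ / (4 * G N) ≤ ‖(Real.pi : ℂ) * Complex.I * (zdot m ω : ℂ)‖ - ‖β‖ := by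
        rw [h_quarter] at hβ ⊢; linarith
    _ ≤ ‖β - (Real.pi : ℂ) * Complex.I * (zdot m ω : ℂ)‖ := by
        rw [norm_sub_rev]; exact norm_sub_norm_le _ _

end

theorem stmt5_general {d : ℕ} (κ : ℝ) (hκ : 0 < κ) (G g : ℝ → ℝ)
    (hGpos : ∀ t ≥ (1 : ℝ), 0 < G t)
    (hGmono : MonotoneOn G (Set.Ici 1)) (hgmono : MonotoneOn g (Set.Ici 1))
    (hg1 : 1 ≤ g 1)
    (ω : Fin d → ℝ)
    (hω : ∀ m : Fin d → ℤ, m ≠ 0 → κ / G (znorm m) ≤ |zdot m ω|)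
    (α : ℂ) (N : ℕ) (hN : 1 ≤ N) :
    ∃ m : Fin d → ℤ, znorm m ≤ N ∧
      (∀ m' : Fin d → ℤ, m' ≠ 0 → znorm m' ≤ N →
        κ / (4 * G N) / g (znorm m') ≤
          ‖(α - (Real.pi : ℂ) * Complex.I * (zdot m ω : ℂ))
            - (Real.pi : ℂ) * Complex.I * (zdot m' ω : ℂ)‖) ∧
      (m ≠ 0 →
        ‖α - (Real.pi : ℂ) * Complex.I * (zdot m ω : ℂ)‖
          < κ / (4 * G N * g (znorm m))) := by
  set c := κ / (4 * G N)
  have hc : 0 ≤ c := (div_pos hκ (by linarith [hGpos N (by exact_mod_cast hN)])).le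
  have hg : ∀ m : Fin d → ℤ, m ≠ 0 → 1 ≤ g (znorm m) := fun m hm =>
    hg1.trans (hgmono Set.self_mem_Ici (one_le_znorm hm) (one_le_znorm hm))
  by_cases hα : Nonresonant ω N c g α
  · exact ⟨0, by simp, by simpa [Nonresonant] using hα, fun h0 => (h0 rfl).elim⟩
  obtain ⟨m, hm, hmN, hlt⟩ : ∃ m : Fin d → ℤ, m ≠ 0 ∧ znorm m ≤ N ∧
      ‖α - (Real.pi : ℂ) * Complex.I * (zdot m ω : ℂ)‖ < c / g (znorm m) := by
    simpa [Nonresonant] using hα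
  have hβ : ‖α - (Real.pi : ℂ) * Complex.I * (zdot m ω : ℂ)‖ ≤ c :=
    hlt.le.trans (div_le_self hc (hg m hm))
  refine ⟨m, hmN, fun m' hm' hm'N => ?_, fun _ => by rwa [div_div] at hlt⟩
  exact (div_le_self hc (hg m' hm')).trans
    (div_le_norm_sub_of_norm_le hκ hGpos hGmono hω hN hβ hm' hm'N)

/-- Lemma on uniqueness of resonances: for `ω ∈ NR(κ,G)`,
`α ∈ ℂ` and `N ≥ 1`, there is `m ∈ ℤ^d` with `|m| ≤ N` such that
`α − iπ⟨m,ω⟩ ∈ NR^N_ω(κ/(4G(N)), g)`; moreover if `m ≠ 0` then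
`|α − iπ⟨m,ω⟩| < κ/(4G(N)g(|m|))`. -/
theorem stmt5 {d : ℕ} (κ : ℝ) (hκ : 0 < κ) (G g : ℝ → ℝ)
    (hGpos : ∀ t ≥ (1 : ℝ), 0 < G t) (hgpos : ∀ t ≥ (1 : ℝ), 0 < g t)
    (hGmono : MonotoneOn G (Set.Ici 1)) (hgmono : MonotoneOn g (Set.Ici 1))
    (hG1 : 1 ≤ G 1) (hg1 : 1 ≤ g 1)
    (ω : Fin d → ℝ)
    (hω : ∀ m : Fin d → ℤ, m ≠ 0 → κ / G (znorm m) ≤ |zdot m ω|)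
    (α : ℂ) (N : ℕ) (hN : 1 ≤ N) :
    ∃ m : Fin d → ℤ, znorm m ≤ N ∧
      (∀ m' : Fin d → ℤ, m' ≠ 0 → znorm m' ≤ N →
        κ / (4 * G N) / g (znorm m') ≤
          ‖(α - (Real.pi : ℂ) * Complex.I * (zdot m ω : ℂ))
            - (Real.pi : ℂ) * Complex.I * (zdot m' ω : ℂ)‖) ∧
      (m ≠ 0 →
        ‖α - (Real.pi : ℂ) * Complex.I * (zdot m ω : ℂ)‖
          < κ / (4 * G N * g (znorm m))) :=
  stmt5_general κ hκ G g hGpos hGmono hgmono hg1 ω hω α N hN
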